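/- arXiv:0706.1617 — 2 statements merged into one kernel-verified Lean document; each statement's English description precedes it below -/
import Mathlib

section
/- For every finite strategic game H, MGW^ω = MLW^ω: the outcome of iterating the global elimination of strategies weakly dominated by a mixed strategy equals the outcome of iterating the local elimination of strategies weakly dominated by a mixed strategy, both started from H. -/
open Function

/-- The opponents' part of the joint strategy `t` lies in the restriction `G`. -/
def OppIn {ι : Type*} [DecidableEq ι] {σ : ι → Type*} (G : ∀ i, Set (σ i)) (i : ι) (t : ∀ j, σ j) : Prop :=
  ∀ j, j ≠ i → t j ∈ G j

/-- `s'` strictly dominates `s` on the restriction `G` (pure strategies). -/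
def SDom {ι : Type*} [DecidableEq ι] {σ : ι → Type*} (p : ι → (∀ j, σ j) → ℝ) (G : ∀ i, Set (σ i))
    (i : ι) (s' s : σ i) : Prop :=
  ∀ t : ∀ j, σ j, OppIn G i t → p i (update t i s) < p i (update t i s')

/-- `s'` weakly dominates `s` on the restriction `G` (pure strategies). -/
def WDom {ι : Type*} [DecidableEq ι] {σ : ι → Type*} (p : ι → (∀ j, σ j) → ℝ) (G : ∀ i, Set (σ i))
    (i : ι) (s' s : σ i) : Prop :=
  (∀ t : ∀ j, σ j, OppIn G i t → p i (update t i s) ≤ p i (update t i s')) ∧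
  (∃ t : ∀ j, σ j, OppIn G i t ∧ p i (update t i s) < p i (update t i s'))

/-- Probability distributions over a finite type with support contained in `A`. -/
def Mixed {α : Type*} [Fintype α] (A : Set α) : Set (α → ℝ) :=
  {m | (∀ a, 0 ≤ m a) ∧ ∑ a, m a = 1 ∧ ∀ a, m a ≠ 0 → a ∈ A}

/-- Expected payoff of player `i` using mixed strategy `m` against `t₋ᵢ`. -/
def epay {ι : Type*} [DecidableEq ι] {σ : ι → Type*} [∀ i, Fintype (σ i)]
    (p : ι → (∀ j, σ j) → ℝ) (i : ι) (m : σ i → ℝ) (t : ∀ j, σ j) : ℝ :=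
  ∑ a, m a * p i (update t i a)

/-- The mixed strategy `m` strictly dominates `s` on `G`. -/
def MSDom {ι : Type*} [DecidableEq ι] {σ : ι → Type*} [∀ i, Fintype (σ i)]
    (p : ι → (∀ j, σ j) → ℝ) (G : ∀ i, Set (σ i)) (i : ι) (m : σ i → ℝ) (s : σ i) : Prop :=
  ∀ t : ∀ j, σ j, OppIn G i t → p i (update t i s) < epay p i m t

/-- The mixed strategy `m` weakly dominates `s` on `G`. -/
def MWDom {ι : Type*} [DecidableEq ι] {σ : ι → Type*} [∀ i, Fintype (σ i)]
    (p : ι → (∀ j, σ j) → ℝ) (G : ∀ i, Set (σ i)) (i : ι) (m : σ i → ℝ) (s : σ i) : Prop :=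
  (∀ t : ∀ j, σ j, OppIn G i t → p i (update t i s) ≤ epay p i m t) ∧
  (∃ t : ∀ j, σ j, OppIn G i t ∧ p i (update t i s) < epay p i m t)

/-- Local elimination of strategies strictly dominated by a pure strategy. -/
def LS {ι : Type*} [DecidableEq ι] {σ : ι → Type*} (p : ι → (∀ j, σ j) → ℝ)
    (G : ∀ i, Set (σ i)) : ∀ i, Set (σ i) :=
  fun i => {s | s ∈ G i ∧ ¬ ∃ s' ∈ G i, SDom p G i s' s}

/-- Global elimination of strategies strictly dominated by a pure strategy. -/
def GS {ι : Type*} [DecidableEq ι] {σ : ι → Type*} (p : ι → (∀ j, σ j) → ℝ)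
    (G : ∀ i, Set (σ i)) : ∀ i, Set (σ i) :=
  fun i => {s | s ∈ G i ∧ ¬ ∃ s' : σ i, SDom p G i s' s}

/-- Local elimination of strategies weakly dominated by a pure strategy. -/
def LW {ι : Type*} [DecidableEq ι] {σ : ι → Type*} (p : ι → (∀ j, σ j) → ℝ)
    (G : ∀ i, Set (σ i)) : ∀ i, Set (σ i) :=
  fun i => {s | s ∈ G i ∧ ¬ ∃ s' ∈ G i, WDom p G i s' s}

/-- Global elimination of strategies weakly dominated by a pure strategy. -/
def GW {ι : Type*} [DecidableEq ι] {σ : ι → Type*} (p : ι → (∀ j, σ j) → ℝ)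
    (G : ∀ i, Set (σ i)) : ∀ i, Set (σ i) :=
  fun i => {s | s ∈ G i ∧ ¬ ∃ s' : σ i, WDom p G i s' s}

/-- Local elimination of strategies strictly dominated by a mixed strategy. -/
def MLS {ι : Type*} [DecidableEq ι] {σ : ι → Type*} [∀ i, Fintype (σ i)] (p : ι → (∀ j, σ j) → ℝ)
    (G : ∀ i, Set (σ i)) : ∀ i, Set (σ i) :=
  fun i => {s | s ∈ G i ∧ ¬ ∃ m ∈ Mixed (G i), MSDom p G i m s}

/-- Global elimination of strategies strictly dominated by a mixed strategy. -/
def MGS {ι : Type*} [DecidableEq ι] {σ : ι → Type*} [∀ i, Fintype (σ i)] (p : ι → (∀ j, σ j) → ℝ)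
    (G : ∀ i, Set (σ i)) : ∀ i, Set (σ i) :=
  fun i => {s | s ∈ G i ∧ ¬ ∃ m ∈ Mixed (Set.univ : Set (σ i)), MSDom p G i m s}

/-- Local elimination of strategies weakly dominated by a mixed strategy. -/
def MLW {ι : Type*} [DecidableEq ι] {σ : ι → Type*} [∀ i, Fintype (σ i)] (p : ι → (∀ j, σ j) → ℝ)
    (G : ∀ i, Set (σ i)) : ∀ i, Set (σ i) :=
  fun i => {s | s ∈ G i ∧ ¬ ∃ m ∈ Mixed (G i), MWDom p G i m s}

/-- Global elimination of strategies weakly dominated by a mixed strategy. -/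
def MGW {ι : Type*} [DecidableEq ι] {σ : ι → Type*} [∀ i, Fintype (σ i)] (p : ι → (∀ j, σ j) → ℝ)
    (G : ∀ i, Set (σ i)) : ∀ i, Set (σ i) :=
  fun i => {s | s ∈ G i ∧ ¬ ∃ m ∈ Mixed (Set.univ : Set (σ i)), MWDom p G i m s}

/-!
The two iterations agree at every stage. Call a restriction `G` *covering* if every strategy of
the full game, eliminated or not, is weakly matched on `G` by a mixed strategy supported in `G`.
The full game is covering, and `MLW` preserves coverings: among the mixed strategies over `Gᵢ`
matching a given strategy, one maximizing the total payoff against `G₋ᵢ` puts no weight on a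
strategy weakly dominated within `G`, since shifting that weight onto the dominating mixture
raises the total. On a covering restriction a global mixed dominator can be replaced, by mixing,
with a local one, so `MGW` and `MLW` agree there.
-/

open Function Finset

section Mixed

variable {α : Type*} [Fintype α]

lemma mixed_eq_stdSimplex_inter (A : Set α) :
    Mixed A = stdSimplex ℝ α ∩ ⋂ a ∈ Aᶜ, {m | m a = 0} := by
  ext m
  simp only [Mixed, stdSimplex, Set.mem_inter_iff, Set.mem_iInter, Set.mem_ofPred_eq,
    Set.mem_compl_iff, and_assoc]
  exact and_congr_right' <| and_congr_right' <| forall_congr' fun a => not_imp_comm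

lemma convex_mixed (A : Set α) : Convex ℝ (Mixed A) := by
  rw [mixed_eq_stdSimplex_inter]
  refine (convex_stdSimplex ℝ α).inter (convex_iInter₂ fun a _ => ?_)
  intro x hx y hy s t _ _ _
  simp_all

lemma isCompact_mixed (A : Set α) : IsCompact (Mixed A) := by
  rw [mixed_eq_stdSimplex_inter]
  exact (isCompact_stdSimplex ℝ α).inter_right
    (isClosed_biInter fun a _ => isClosed_eq (continuous_apply a) continuous_const)

lemma single_mem_mixed [DecidableEq α] {A : Set α} {a : α} (ha : a ∈ A) :
    Pi.single a 1 ∈ Mixed A := by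
  refine ⟨fun b => ?_, by simp, fun b hb => ?_⟩
  · by_cases hb : b = a <;> simp [hb]
  · by_cases hba : b = a
    · exact hba ▸ ha
    · simp [hba] at hb

lemma add_smul_sub_single_mem_mixed [DecidableEq α] {A : Set α} {m m₁ : α → ℝ}
    (hm : m ∈ Mixed A) (hm₁ : m₁ ∈ Mixed A) (b : α) :
    m + m b • (m₁ - Pi.single b 1) ∈ Mixed A := by
  obtain ⟨hm0, hm1, hmA⟩ := hm
  obtain ⟨hm₁0, hm₁1, hm₁A⟩ := hm₁
  refine ⟨fun c => ?_, ?_, fun c hc => ?_⟩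
  · by_cases hcb : c = b
    · subst hcb
      simp only [Pi.add_apply, Pi.smul_apply, Pi.sub_apply, Pi.single_eq_same, smul_eq_mul]
      nlinarith [mul_nonneg (hm0 c) (hm₁0 c)]
    · simp only [Pi.add_apply, Pi.smul_apply, Pi.sub_apply, Pi.single_eq_of_ne hcb, smul_eq_mul]
      nlinarith [mul_nonneg (hm0 b) (hm₁0 c), hm0 c]
  · simp [sum_add_distrib, ← mul_sum, hm1, hm₁1]
  · by_cases hcb : c = b
    · subst hcb
      refine hm₁A c fun h => hc ?_
      simp [h]
    · by_contra hcA
      simp [Pi.single_eq_of_ne hcb, not_imp_comm.1 (hmA c) hcA,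
        not_imp_comm.1 (hm₁A c) hcA] at hc

end Mixed

lemma OppIn.mono {ι : Type*} [DecidableEq ι] {σ : ι → Type*} {G G' : ∀ i, Set (σ i)}
    (hG : G' ≤ G) {i : ι} {t : ∀ j, σ j} (ht : OppIn G' i t) : OppIn G i t :=
  fun j hj => hG j (ht j hj)

section Dominance

variable {ι : Type*} [DecidableEq ι] {σ : ι → Type*} [∀ i, Fintype (σ i)]
  (p : ι → (∀ j, σ j) → ℝ)

lemma MLW_le (G : ∀ i, Set (σ i)) : MLW p G ≤ G :=
  fun _ _ hs => hs.1

section Epay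

variable (i : ι) (t : ∀ j, σ j)

lemma continuous_epay : Continuous fun m : σ i → ℝ => epay p i m t :=
  continuous_finsetSum _ fun a _ => (continuous_apply a).mul continuous_const

lemma epay_single [DecidableEq (σ i)] (a : σ i) :
    epay p i (Pi.single a 1) t = p i (update t i a) := by
  simp [epay, Pi.single_apply]

lemma epay_add_smul_sub_single [DecidableEq (σ i)] (m m₁ : σ i → ℝ) (b : σ i) :
    epay p i (m + m b • (m₁ - Pi.single b 1)) t =
      epay p i m t + m b * (epay p i m₁ t - p i (update t i b)) := by
  simp [epay, add_mul, sub_mul, sum_add_distrib, sum_sub_distrib, mul_assoc, ← mul_sum,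
    Pi.single_apply]

end Epay

def PurePayoffLE (G : ∀ i, Set (σ i)) (i : ι) (a : σ i) (m : σ i → ℝ) : Prop :=
  ∀ t, OppIn G i t → p i (update t i a) ≤ epay p i m t

def PayoffLE (G : ∀ i, Set (σ i)) (i : ι) (m m' : σ i → ℝ) : Prop :=
  ∀ t, OppIn G i t → epay p i m t ≤ epay p i m' t

variable {p}

lemma PurePayoffLE.trans_payoffLE {G : ∀ i, Set (σ i)} {i : ι} {a : σ i} {m m' : σ i → ℝ}
    (h : PurePayoffLE p G i a m) (h' : PayoffLE p G i m m') : PurePayoffLE p G i a m' :=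
  fun t ht => (h t ht).trans (h' t ht)

lemma PurePayoffLE.mono {G G' : ∀ i, Set (σ i)} (hG : G' ≤ G) {i : ι} {a : σ i}
    {m : σ i → ℝ} (h : PurePayoffLE p G i a m) : PurePayoffLE p G' i a m :=
  fun t ht => h t (ht.mono hG)

lemma MWDom.of_payoffLE {G : ∀ i, Set (σ i)} {i : ι} {s : σ i} {m m' : σ i → ℝ}
    (h : MWDom p G i m s) (h' : PayoffLE p G i m m') : MWDom p G i m' s :=
  ⟨PurePayoffLE.trans_payoffLE h.1 h', h.2.imp fun t ht => ⟨ht.1, ht.2.trans_le (h' t ht.1)⟩⟩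

lemma isClosed_setOf_purePayoffLE (G : ∀ i, Set (σ i)) (i : ι) (a : σ i) :
    IsClosed {m | PurePayoffLE p G i a m} := by
  simp only [PurePayoffLE, Set.ofPred_forall]
  exact isClosed_iInter fun t => isClosed_iInter fun _ =>
    isClosed_le continuous_const (continuous_epay p i t)

lemma exists_mixed_payoffLE {G : ∀ i, Set (σ i)} {i : ι} {A B : Set (σ i)} {m : σ i → ℝ}
    (hm : m ∈ Mixed A) (h : ∀ a ∈ A, ∃ m' ∈ Mixed B, PurePayoffLE p G i a m') :
    ∃ m' ∈ Mixed B, PayoffLE p G i m m' := by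
  classical
  choose! f hfB hf using h
  set s := univ.filter fun a => m a ≠ 0
  have hsA : ∀ a ∈ s, a ∈ A := fun a ha => hm.2.2 a (mem_filter.1 ha).2
  refine ⟨∑ a ∈ s, m a • f a, (convex_mixed B).sum_mem (fun a _ => hm.1 a) ?_
    fun a ha => hfB a (hsA a ha), fun t ht => ?_⟩
  · rw [sum_filter_ne_zero, hm.2.1]
  · calc epay p i m t = ∑ a ∈ s, m a * p i (update t i a) :=
          (sum_filter_of_ne fun a _ h => left_ne_zero_of_mul h).symm
      _ ≤ ∑ a ∈ s, m a * epay p i (f a) t :=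
          sum_le_sum fun a ha => mul_le_mul_of_nonneg_left (hf a (hsA a ha) t ht) (hm.1 a)
      _ = epay p i (∑ a ∈ s, m a • f a) t := by
          simp only [epay, Finset.sum_apply, Pi.smul_apply, smul_eq_mul, sum_mul, mul_sum,
            mul_assoc]
          exact sum_comm

section Potential

variable [Fintype ι]

variable (p) in
open Classical in
noncomputable def totalPayoff (G : ∀ i, Set (σ i)) (i : ι) (m : σ i → ℝ) : ℝ :=
  ∑ t ∈ univ.filter (OppIn G i), epay p i m t

variable (p) in
lemma continuous_totalPayoff (G : ∀ i, Set (σ i)) (i : ι) : Continuous (totalPayoff p G i) :=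
  continuous_finsetSum _ fun t _ => continuous_epay p i t

lemma totalPayoff_lt_totalPayoff {G : ∀ i, Set (σ i)} {i : ι} {m m' : σ i → ℝ}
    (h : PayoffLE p G i m m') {t₀ : ∀ j, σ j} (ht₀ : OppIn G i t₀)
    (hlt : epay p i m t₀ < epay p i m' t₀) : totalPayoff p G i m < totalPayoff p G i m' := by
  classical
  exact sum_lt_sum (fun t ht => h t (mem_filter.1 ht).2) ⟨t₀, mem_filter.2 ⟨mem_univ _, ht₀⟩, hlt⟩

variable (p) in
lemma exists_mixed_MLW_purePayoffLE (G : ∀ i, Set (σ i)) {i : ι} {a : σ i} (ha : a ∈ G i) :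
    ∃ m ∈ Mixed (MLW p G i), PurePayoffLE p G i a m := by
  classical
  set S := Mixed (G i) ∩ {m | PurePayoffLE p G i a m}
  have hS : IsCompact S := (isCompact_mixed _).inter_right (isClosed_setOf_purePayoffLE G i a)
  have haS : Pi.single a 1 ∈ S := ⟨single_mem_mixed ha, fun t _ => (epay_single p i t a).ge⟩
  obtain ⟨m, ⟨hmG, hma⟩, hmax⟩ :=
    hS.exists_isMaxOn ⟨_, haS⟩ (continuous_totalPayoff p G i).continuousOn
  refine ⟨m, ⟨hmG.1, hmG.2.1, fun b hb => ⟨hmG.2.2 b hb, ?_⟩⟩, hma⟩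
  rintro ⟨m₁, hm₁, hdom⟩
  -- shift the weight of `b` onto its dominator `m₁`
  set m' := m + m b • (m₁ - Pi.single b 1)
  have hb : 0 < m b := (hmG.1 b).lt_of_ne' hb
  have hmm' : PayoffLE p G i m m' := fun t ht => by
    rw [epay_add_smul_sub_single]
    exact le_add_of_nonneg_right (mul_nonneg hb.le (sub_nonneg.2 (hdom.1 t ht)))
  obtain ⟨t₀, ht₀, hlt⟩ := hdom.2
  have hm'S : m' ∈ S := ⟨add_smul_sub_single_mem_mixed hmG hm₁ b, hma.trans_payoffLE hmm'⟩
  refine (hmax hm'S).not_gt (totalPayoff_lt_totalPayoff hmm' ht₀ ?_)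
  rw [epay_add_smul_sub_single]
  exact lt_add_of_pos_right _ (mul_pos hb (sub_pos.2 hlt))

end Potential

variable (p) in
def MixedCovers (G : ∀ i, Set (σ i)) : Prop :=
  ∀ i (a : σ i), ∃ m ∈ Mixed (G i), PurePayoffLE p G i a m

variable (p) in
lemma mixedCovers_top : MixedCovers p (⊤ : ∀ i, Set (σ i)) := by
  classical
  exact fun i a => ⟨Pi.single a 1, single_mem_mixed trivial, fun t _ => (epay_single p i t a).ge⟩

lemma MixedCovers.MLW [Fintype ι] {G : ∀ i, Set (σ i)} (hG : MixedCovers p G) :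
    MixedCovers p (MLW p G) := by
  intro i a
  obtain ⟨m, hm, ham⟩ := hG i a
  obtain ⟨m', hm', hmm'⟩ :=
    exists_mixed_payoffLE hm fun b hb => exists_mixed_MLW_purePayoffLE p G hb
  exact ⟨m', hm', (ham.trans_payoffLE hmm').mono (MLW_le p G)⟩

lemma MGW_eq_MLW_of_mixedCovers {G : ∀ i, Set (σ i)} (hG : MixedCovers p G) :
    MGW p G = MLW p G := by
  ext i s
  refine ⟨fun ⟨hs, hno⟩ => ⟨hs, fun ⟨m, hm, hdom⟩ => hno ⟨m, ?_, hdom⟩⟩,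
    fun ⟨hs, hno⟩ => ⟨hs, fun ⟨m, hm, hdom⟩ => hno ?_⟩⟩
  · exact ⟨hm.1, hm.2.1, fun _ _ => trivial⟩
  · obtain ⟨m', hm', hmm'⟩ := exists_mixed_payoffLE hm fun a _ => hG i a
    exact ⟨m', hm', hdom.of_payoffLE hmm'⟩

end Dominance

theorem MGW_omega_eq_MLW_omega_general {ι : Type*} [DecidableEq ι] [Fintype ι] {σ : ι → Type*}
    [∀ i, Fintype (σ i)] (p : ι → (∀ j, σ j) → ℝ) :
    (⨅ k : ℕ, (MGW p)^[k] ⊤) = ⨅ k : ℕ, (MLW p)^[k] ⊤ := by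
  have hcovers : ∀ k, MixedCovers p ((MLW p)^[k] ⊤) := fun k => by
    induction k with
    | zero => exact mixedCovers_top p
    | succ k ih => simpa only [iterate_succ_apply'] using ih.MLW
  refine iInf_congr fun k => ?_
  induction k with
  | zero => rfl
  | succ k ih =>
    rw [iterate_succ_apply', iterate_succ_apply', ih, MGW_eq_MLW_of_mixedCovers (hcovers k)]

/-- MGW^ω = MLW^ω. -/
theorem MGW_omega_eq_MLW_omega {ι : Type*} [DecidableEq ι] [Fintype ι] {σ : ι → Type*}
    [∀ i, Fintype (σ i)] [∀ i, Nonempty (σ i)]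
    (hn : 1 < Fintype.card ι) (p : ι → (∀ j, σ j) → ℝ) :
    (⨅ k : ℕ, (MGW p)^[k] ⊤) = ⨅ k : ℕ, (MLW p)^[k] ⊤ :=
  MGW_omega_eq_MLW_omega_general p
end

section
/- For every finite strategic game H, LW^ω ⊆ LS^ω: the outcome of iterated elimination of strategies weakly dominated by a pure strategy is contained in the outcome of iterated elimination of strategies strictly dominated by a pure strategy. -/
open Function

/-! A strategy weakly dominated on `H` is weakly dominated by a strategy that survives `LW` on `H`
(weak dominance is a strict order on a finite set), and the payoff inequalities of a weak dominance
on `H` hold on every `G ≤ H`. Hence if `x` strictly dominates `s` on the limit `W := LW^ω`, the dominator can be pushed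
through every round of `LW`, and at the round where the iteration stabilises it lies in `W`.
Since opponents have strategies in `W`, strict dominance on `W` is weak dominance, which `W = LW W`
excludes. So no strategy of `W` is strictly dominated on `W` by any strategy, and such a restriction
survives every round of `LS`. -/

theorem Antitone.exists_forall_ge_eq_iInf {α : Type*} [CompleteLattice α] [WellFoundedLT α]
    {f : ℕ → α} (hf : Antitone f) : ∃ N, ∀ m, N ≤ m → f m = ⨅ k, f k := by
  obtain ⟨N, hN⟩ := WellFoundedLT.antitone_chain_condition hf
  refine ⟨N, fun m hm => le_antisymm (le_iInf fun k => ?_) (iInf_le f m)⟩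
  rcases le_total k m with hkm | hmk
  · exact hf hkm
  · rw [← hN m hm, hN k (hm.trans hmk)]

section Dominance

variable {ι : Type*} [DecidableEq ι] {σ : ι → Type*} (p : ι → (∀ j, σ j) → ℝ)
  {G H : ∀ i, Set (σ i)} {i : ι}

theorem OppIn.mono_s13 {t : ∀ j, σ j} (hGH : G ≤ H) (ht : OppIn G i t) : OppIn H i t :=
  fun j hj => hGH j (ht j hj)

theorem exists_oppIn (hG : ∀ j, (G j).Nonempty) : ∃ t, OppIn G i t :=
  ⟨fun j => (hG j).some, fun j _ => (hG j).some_mem⟩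

variable {p}

theorem SDom.mono_s13 {s' s : σ i} (hGH : G ≤ H) (h : SDom p H i s' s) : SDom p G i s' s :=
  fun t ht => h t (ht.mono_s13 hGH)

theorem SDom.wdom {s' s : σ i} (hG : ∀ j, (G j).Nonempty) (h : SDom p G i s' s) :
    WDom p G i s' s :=
  have ⟨t, ht⟩ := exists_oppIn hG
  ⟨fun t ht => (h t ht).le, t, ht, h t ht⟩

theorem WDom.trans {a b c : σ i} (hab : WDom p G i a b) (hbc : WDom p G i b c) :
    WDom p G i a c :=
  have ⟨t, ht, hlt⟩ := hbc.2
  ⟨fun t ht => (hbc.1 t ht).trans (hab.1 t ht), t, ht, hlt.trans_le (hab.1 t ht)⟩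

theorem WDom.irrefl (a : σ i) : ¬ WDom p G i a a :=
  fun ⟨_, _, _, hlt⟩ => hlt.false

instance : IsTrans (σ i) (WDom p G i) := ⟨fun _ _ _ => WDom.trans⟩

instance : Std.Irrefl (WDom p G i) := ⟨WDom.irrefl⟩

theorem exists_mem_LW_eq_or_wdom [Finite (σ i)] {x : σ i} (hx : x ∈ G i) :
    ∃ y ∈ LW p G i, y = x ∨ WDom p G i y x := by
  induction x using (Finite.wellFounded_of_trans_of_irrefl (WDom p G i)).induction with
  | _ x ih =>
    by_cases hxW : x ∈ LW p G i
    · exact ⟨x, hxW, .inl rfl⟩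
    obtain ⟨z, hz, hzx⟩ : ∃ z ∈ G i, WDom p G i z x := not_and_not_right.mp hxW hx
    obtain ⟨y, hy, rfl | hyz⟩ := ih z hzx hz
    · exact ⟨y, hy, .inr hzx⟩
    · exact ⟨y, hy, .inr (hyz.trans hzx)⟩

theorem LW_nonempty [Finite (σ i)] (hG : (G i).Nonempty) : (LW p G i).Nonempty :=
  have ⟨_, hx⟩ := hG
  have ⟨y, hy, _⟩ := exists_mem_LW_eq_or_wdom hx
  ⟨y, hy⟩

theorem exists_mem_LW_sdom [Finite (σ i)] {x s : σ i} (hGH : G ≤ H) (hx : x ∈ H i)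
    (hxs : SDom p G i x s) : ∃ y ∈ LW p H i, SDom p G i y s := by
  obtain ⟨y, hy, rfl | hyx⟩ := exists_mem_LW_eq_or_wdom hx
  · exact ⟨y, hy, hxs⟩
  · exact ⟨y, hy, fun t ht => (hxs t ht).trans_le (hyx.1 t (ht.mono_s13 hGH))⟩

theorem le_LS_of_le_GS (hGH : G ≤ H) (hG : G ≤ GS p G) : G ≤ LS p H :=
  fun i _ hs => ⟨hGH i hs, fun ⟨s', _, hdom⟩ => (hG i hs).2 ⟨s', hdom.mono_s13 hGH⟩⟩

theorem le_iterate_LS_of_le_GS (hG : G ≤ GS p G) (k : ℕ) : G ≤ (LS p)^[k] ⊤ := by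
  induction k with
  | zero => exact le_top
  | succ k ih => rw [iterate_succ_apply']; exact le_LS_of_le_GS ih hG

end Dominance

section IteratedLW

variable {ι : Type*} [DecidableEq ι] {σ : ι → Type*} (p : ι → (∀ j, σ j) → ℝ)

theorem LW_le (G : ∀ i, Set (σ i)) : LW p G ≤ G :=
  fun _ _ hs => hs.1

theorem antitone_iterate_LW : Antitone fun k => (LW p)^[k] (⊤ : ∀ i, Set (σ i)) :=
  antitone_nat_of_succ_le fun k => by rw [iterate_succ_apply']; exact LW_le p _

theorem iterate_LW_nonempty [∀ i, Finite (σ i)] [∀ i, Nonempty (σ i)] (k : ℕ) (i : ι) :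
    ((LW p)^[k] ⊤ i).Nonempty := by
  induction k generalizing i with
  | zero => exact Set.univ_nonempty
  | succ k ih => rw [iterate_succ_apply']; exact LW_nonempty (ih i)

theorem exists_mem_iterate_LW_sdom [∀ i, Finite (σ i)] {G : ∀ i, Set (σ i)} {i : ι}
    {x s : σ i} (hG : ∀ k, G ≤ (LW p)^[k] ⊤) (hxs : SDom p G i x s) (n : ℕ) :
    ∃ y ∈ (LW p)^[n] ⊤ i, SDom p G i y s := by
  induction n with
  | zero => exact ⟨x, trivial, hxs⟩
  | succ n ih =>
    obtain ⟨y, hy, hys⟩ := ih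
    rw [iterate_succ_apply']
    exact exists_mem_LW_sdom (hG n) hy hys

theorem iInf_iterate_LW_le_GS [Finite ι] [∀ i, Finite (σ i)] [∀ i, Nonempty (σ i)] :
    (⨅ k, (LW p)^[k] ⊤) ≤ GS p (⨅ k, (LW p)^[k] (⊤ : ∀ i, Set (σ i))) := by
  obtain ⟨N, hN⟩ := (antitone_iterate_LW p).exists_forall_ge_eq_iInf
  set W := ⨅ k, (LW p)^[k] (⊤ : ∀ i, Set (σ i))
  have hW : (LW p)^[N] ⊤ = W := hN N le_rfl
  have hfix : LW p W = W := by
    rw [← hW, ← iterate_succ_apply' (LW p), hN (N + 1) N.le_succ, hW]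
  have hne : ∀ i, (W i).Nonempty := hW ▸ iterate_LW_nonempty p N
  intro i s hs
  refine ⟨hs, fun ⟨x, hxs⟩ => ?_⟩
  obtain ⟨y, hy, hys⟩ := exists_mem_iterate_LW_sdom p (iInf_le _) hxs N
  rw [hW] at hy
  rw [← hfix] at hs
  exact hs.2 ⟨y, hy, hys.wdom hne⟩

end IteratedLW

theorem LW_omega_subset_LS_omega_general {ι : Type*} [DecidableEq ι] [Fintype ι] {σ : ι → Type*}
    [∀ i, Fintype (σ i)] [∀ i, Nonempty (σ i)]
    (p : ι → (∀ j, σ j) → ℝ) :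
    (⨅ k : ℕ, (LW p)^[k] ⊤) ≤ ⨅ k : ℕ, (LS p)^[k] ⊤ :=
  le_iInf (le_iterate_LS_of_le_GS (iInf_iterate_LW_le_GS p))

/-- LW^ω ⊆ LS^ω. -/
theorem LW_omega_subset_LS_omega {ι : Type*} [DecidableEq ι] [Fintype ι] {σ : ι → Type*}
    [∀ i, Fintype (σ i)] [∀ i, Nonempty (σ i)]
    (hn : 1 < Fintype.card ι) (p : ι → (∀ j, σ j) → ℝ) :
    (⨅ k : ℕ, (LW p)^[k] ⊤) ≤ ⨅ k : ℕ, (LS p)^[k] ⊤ :=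
  LW_omega_subset_LS_omega_general p
end
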